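/- Let (G', X') be a terminal graph, let v ∈ X', set X = X' ∖ {v}, let N ⊆ X, and let G be the graph obtained from G' by adding the edge {v, w} for every w ∈ N, so that (G, X) is a terminal graph. Let S ⊆ V(G') ∖ X' have characteristic (α', β') in (G', X'). Then the characteristic (α, β) of S ∪ {v} in (G, X) satisfies, for every D ⊆ X: α(D) = α'(D ∪ {v}) and β(D) = β'(D ∪ {v}). -/

import Mathlib

open Finset

variable {V : Type*}

/-- `M` is a vertex cover of `(G with vertex set A) − S`: `M ⊆ A \ S` and every
edge of `G` with both endpoints outside `S` has an endpoint in `M`. -/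
def IsVCDel [DecidableEq V] (G : SimpleGraph V) (A S M : Finset V) : Prop :=
  M ⊆ A \ S ∧ ∀ ⦃u v : V⦄, G.Adj u v → u ∉ S → v ∉ S → u ∈ M ∨ v ∈ M

/-- `(G, A, X)` is a terminal graph: vertex set `A`, all edges of `G` inside
`A`, and `X ⊆ A` is an independent set of `G`. -/
def IsTerminalGraph [DecidableEq V] (G : SimpleGraph V) (A X : Finset V) : Prop :=
  X ⊆ A ∧ (∀ ⦃u v : V⦄, G.Adj u v → u ∈ A ∧ v ∈ A) ∧
    ∀ u ∈ X, ∀ v ∈ X, ¬ G.Adj u v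

/-- A vertex cover of type `D` of `(G with vertex set A, terminals X) − S`:
a vertex cover `M` of `G − S` with `M ∩ X = D`. -/
def IsTypedVC [DecidableEq V] (G : SimpleGraph V) (A X S D M : Finset V) : Prop :=
  IsVCDel G A S M ∧ M ∩ X = D

/-- `(α, β)` is the characteristic of `S` in the terminal graph `(G, A, X)`:
for each `D ⊆ X`, `α D` is the minimum reduced size `|M \ X|` of a vertex
cover `M` of type `D` of `G − S`, and `β D = 1` iff there is exactly one vertex
cover of type `D` with reduced size `α D` (and `β D = 2` otherwise). -/
def IsCharacteristic [DecidableEq V] (G : SimpleGraph V) (A X S : Finset V)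
    (α β : Finset V → ℕ) : Prop :=
  ∀ D ⊆ X,
    (∃ M, IsTypedVC G A X S D M ∧ (M \ X).card = α D) ∧
    (∀ M, IsTypedVC G A X S D M → α D ≤ (M \ X).card) ∧
    (β D = 1 ∨ β D = 2) ∧
    (β D = 1 ↔ ∃! M, IsTypedVC G A X S D M ∧ (M \ X).card = α D)

/-!
Once `v` is deleted, the new edges at `v` are irrelevant, and since `v` is a terminal of `G'`,
`M ↦ M ∪ {v}` is a bijection from the vertex covers of type `D` of `G − (S ∪ {v})` onto those of
type `D ∪ {v}` of `G' − S`, and it preserves reduced size because `v ∈ X'`. Minimum reduced size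
and uniqueness of a minimiser are invariant under such a bijection.
-/

section Transfer

variable {α β γ : Type*} {p : α → Prop} {q : β → Prop}

theorem Equiv.image_setOf_eq_of_subtype (e : {a // p a} ≃ {b // q b}) (f : α → γ)
    (g : β → γ) (hfg : ∀ a, g (e a) = f a) : f '' {a | p a} = g '' {b | q b} := by
  ext c
  constructor
  · rintro ⟨a, ha, rfl⟩
    exact ⟨e ⟨a, ha⟩, (e ⟨a, ha⟩).2, hfg ⟨a, ha⟩⟩
  · rintro ⟨b, hb, rfl⟩
    exact ⟨e.symm ⟨b, hb⟩, (e.symm ⟨b, hb⟩).2, by rw [← hfg, e.apply_symm_apply]⟩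

theorem Equiv.existsUnique_and_congr_of_subtype (e : {a // p a} ≃ {b // q b}) (f : α → γ)
    (g : β → γ) (hfg : ∀ a, g (e a) = f a) (c : γ) :
    (∃! a, p a ∧ f a = c) ↔ ∃! b, q b ∧ g b = c :=
  Equiv.existsUnique_subtype_congr <|
    (Equiv.subtypeSubtypeEquivSubtypeInter p (f · = c)).symm.trans <|
      (e.subtypeEquiv fun a => by rw [hfg]).trans
        (Equiv.subtypeSubtypeEquivSubtypeInter q (g · = c))

end Transfer

section Characteristic

variable [DecidableEq V]

theorem IsCharacteristic.isLeast {G : SimpleGraph V} {A X S : Finset V} {α β : Finset V → ℕ}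
    (h : IsCharacteristic G A X S α β) {D : Finset V} (hD : D ⊆ X) :
    IsLeast ((fun M => (M \ X).card) '' {M | IsTypedVC G A X S D M}) (α D) :=
  ⟨(h D hD).1.imp fun _ hM => hM, by
    rintro _ ⟨M, hM, rfl⟩
    exact (h D hD).2.1 M hM⟩

theorem IsCharacteristic.eq_of_equiv {G₁ G₂ : SimpleGraph V} {A₁ X₁ S₁ A₂ X₂ S₂ D₁ D₂ : Finset V}
    {α₁ β₁ α₂ β₂ : Finset V → ℕ} (h₁ : IsCharacteristic G₁ A₁ X₁ S₁ α₁ β₁)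
    (h₂ : IsCharacteristic G₂ A₂ X₂ S₂ α₂ β₂) (hD₁ : D₁ ⊆ X₁) (hD₂ : D₂ ⊆ X₂)
    (e : {M // IsTypedVC G₁ A₁ X₁ S₁ D₁ M} ≃ {M // IsTypedVC G₂ A₂ X₂ S₂ D₂ M})
    (he : ∀ M, ((e M : Finset V) \ X₂).card = ((M : Finset V) \ X₁).card) :
    α₁ D₁ = α₂ D₂ ∧ β₁ D₁ = β₂ D₂ := by
  have hα : α₁ D₁ = α₂ D₂ :=
    (h₁.isLeast hD₁).unique <|
      e.image_setOf_eq_of_subtype (fun M => (M \ X₁).card) (fun M => (M \ X₂).card) he ▸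
        h₂.isLeast hD₂
  have hβ : β₁ D₁ = 1 ↔ β₂ D₂ = 1 := by
    rw [(h₁ D₁ hD₁).2.2.2, (h₂ D₂ hD₂).2.2.2, hα]
    exact e.existsUnique_and_congr_of_subtype (fun M => (M \ X₁).card)
      (fun M => (M \ X₂).card) he _
  have := (h₁ D₁ hD₁).2.2.1
  have := (h₂ D₂ hD₂).2.2.1
  exact ⟨hα, by omega⟩

end Characteristic

theorem SimpleGraph.eq_or_eq_of_adj_fromEdgeSet_star {v : V} {s : Set V} ⦃u w : V⦄
    (h : (fromEdgeSet ((fun x => s(v, x)) '' s)).Adj u w) : u = v ∨ w = v := by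
  obtain ⟨⟨x, -, hx⟩, -⟩ := h
  rcases Sym2.eq_iff.mp hx with ⟨h, -⟩ | ⟨h, -⟩
  exacts [Or.inl h.symm, Or.inr h.symm]

section Forget

variable [DecidableEq V] {G H : SimpleGraph V} {A X S D M : Finset V} {v : V}

theorem isVCDel_sup_insert_iff (hH : ∀ ⦃u w⦄, H.Adj u w → u = v ∨ w = v) :
    IsVCDel (G ⊔ H) A (insert v S) M ↔ IsVCDel G A (insert v S) M := by
  refine and_congr_right fun _ => ⟨fun hM u w huw => hM (Or.inl huw), ?_⟩
  rintro hM u w (huw | huw) hu hw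
  · exact hM huw hu hw
  · rcases hH huw with rfl | rfl
    · exact absurd (mem_insert_self u S) hu
    · exact absurd (mem_insert_self w S) hw

theorem isVCDel_insert_iff (hvA : v ∈ A) (hvS : v ∉ S) (hvM : v ∉ M) :
    IsVCDel G A (insert v S) M ↔ IsVCDel G A S (insert v M) := by
  unfold IsVCDel
  constructor
  · rintro ⟨hMA, hM⟩
    refine ⟨insert_subset (mem_sdiff.mpr ⟨hvA, hvS⟩) fun x hx => ?_, fun u w huw hu hw => ?_⟩
    · have := mem_sdiff.mp (hMA hx)
      exact mem_sdiff.mpr ⟨this.1, fun hxS => this.2 (mem_insert_of_mem hxS)⟩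
    · by_cases huv : u = v
      · exact Or.inl (huv ▸ mem_insert_self v M)
      by_cases hwv : w = v
      · exact Or.inr (hwv ▸ mem_insert_self v M)
      exact (hM huw (by simp [huv, hu]) (by simp [hwv, hw])).imp
        (mem_insert_of_mem ·) (mem_insert_of_mem ·)
  · rintro ⟨hMA, hM⟩
    refine ⟨fun x hx => ?_, fun u w huw hu hw => ?_⟩
    · have := mem_sdiff.mp (hMA (mem_insert_of_mem hx))
      refine mem_sdiff.mpr ⟨this.1, fun hxS => ?_⟩
      rcases mem_insert.mp hxS with rfl | hxS
      exacts [hvM hx, this.2 hxS]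
    · rw [mem_insert, not_or] at hu hw
      exact (hM huw hu.2 hw.2).imp (mem_of_mem_insert_of_ne · hu.1)
        (mem_of_mem_insert_of_ne · hw.1)

theorem inter_erase_eq_iff_insert_inter_eq (hvX : v ∈ X) (hvM : v ∉ M) (hvD : v ∉ D) :
    M ∩ X.erase v = D ↔ insert v M ∩ X = insert v D := by
  rw [insert_inter_of_mem hvX, inter_erase, erase_eq_of_notMem (by simp [hvM])]
  refine ⟨congrArg (insert v), fun h => ?_⟩
  simpa [erase_insert (by simp [hvM] : v ∉ M ∩ X), erase_insert hvD] using congrArg (erase · v) h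

theorem insert_sdiff_eq_sdiff_erase (hvX : v ∈ X) (hvM : v ∉ M) :
    insert v M \ X = M \ X.erase v := by
  rw [insert_sdiff_of_mem _ hvX, ← sdiff_insert_of_notMem hvM (X.erase v), insert_erase hvX]

theorem IsTypedVC.notMem_of_mem_deleted (hM : IsTypedVC G A X S D M) (hvS : v ∈ S) : v ∉ M :=
  fun hvM => (mem_sdiff.mp (hM.1.1 hvM)).2 hvS

theorem IsTypedVC.mem_of_mem_type (hM : IsTypedVC G A X S D M) (hvD : v ∈ D) : v ∈ M :=
  (mem_inter.mp (hM.2 ▸ hvD)).1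

theorem isTypedVC_forget_iff (hH : ∀ ⦃u w⦄, H.Adj u w → u = v ∨ w = v) (hvA : v ∈ A)
    (hvS : v ∉ S) (hvX : v ∈ X) (hvD : v ∉ D) (hvM : v ∉ M) :
    IsTypedVC (G ⊔ H) A (X.erase v) (insert v S) D M ↔
      IsTypedVC G A X S (insert v D) (insert v M) :=
  and_congr ((isVCDel_sup_insert_iff hH).trans (isVCDel_insert_iff hvA hvS hvM))
    (inter_erase_eq_iff_insert_inter_eq hvX hvM hvD)

def typedVCForgetEquiv (hH : ∀ ⦃u w⦄, H.Adj u w → u = v ∨ w = v) (hvA : v ∈ A)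
    (hvS : v ∉ S) (hvX : v ∈ X) (hvD : v ∉ D) :
    {M // IsTypedVC (G ⊔ H) A (X.erase v) (insert v S) D M} ≃
      {M // IsTypedVC G A X S (insert v D) M} where
  toFun M := ⟨insert v M, (isTypedVC_forget_iff hH hvA hvS hvX hvD
    (M.2.notMem_of_mem_deleted (mem_insert_self v S))).1 M.2⟩
  invFun M := ⟨M.1.erase v, by
    have hvM : v ∈ M.1 := M.2.mem_of_mem_type (mem_insert_self v D)
    refine (isTypedVC_forget_iff hH hvA hvS hvX hvD (notMem_erase v _)).2 ?_
    rw [insert_erase hvM]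
    exact M.2⟩
  left_inv M := Subtype.ext (erase_insert (M.2.notMem_of_mem_deleted (mem_insert_self v S)))
  right_inv M := Subtype.ext (insert_erase (M.2.mem_of_mem_type (mem_insert_self v D)))

theorem card_sdiff_typedVCForgetEquiv (hH : ∀ ⦃u w⦄, H.Adj u w → u = v ∨ w = v) (hvA : v ∈ A)
    (hvS : v ∉ S) (hvX : v ∈ X) (hvD : v ∉ D)
    (M : {M // IsTypedVC (G ⊔ H) A (X.erase v) (insert v S) D M}) :
    ((typedVCForgetEquiv hH hvA hvS hvX hvD M : Finset V) \ X).card =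
      ((M : Finset V) \ X.erase v).card :=
  congrArg card <|
    insert_sdiff_eq_sdiff_erase hvX (M.2.notMem_of_mem_deleted (mem_insert_self v S))

end Forget

theorem char_forget_plus_general [DecidableEq V]
    (G' : SimpleGraph V) (A X' : Finset V) (hG' : IsTerminalGraph G' A X')
    (v : V) (hv : v ∈ X') (N : Finset V)
    (S : Finset V) (hS : S ⊆ A \ X')
    (α' β' α β : Finset V → ℕ)
    (h' : IsCharacteristic G' A X' S α' β')
    (h : IsCharacteristic
          (G' ⊔ SimpleGraph.fromEdgeSet ((fun w => s(v, w)) '' (↑N : Set V)))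
          A (X'.erase v) (insert v S) α β) :
    ∀ D ⊆ X'.erase v, α D = α' (insert v D) ∧ β D = β' (insert v D) := by
  intro D hD
  have hH := @SimpleGraph.eq_or_eq_of_adj_fromEdgeSet_star V v N
  have hvS : v ∉ S := fun hvS => (mem_sdiff.mp (hS hvS)).2 hv
  have hvD : v ∉ D := fun hvD => notMem_erase v X' (hD hvD)
  have hDX' : insert v D ⊆ X' := insert_subset hv ((erase_subset v X').trans' hD)
  exact h.eq_of_equiv h' hD hDX' (typedVCForgetEquiv hH (hG'.1 hv) hvS hv hvD)
    (card_sdiff_typedVCForgetEquiv hH (hG'.1 hv) hvS hv hvD)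

/-- Forget operation (vertex deleted): removing `v` from the terminals, adding
the edges from `v` to `N ⊆ X = X' \ {v}`, and putting `v` into the deleted set,
the characteristic of `S ∪ {v}` in the new terminal graph `(G, X)`. -/
theorem char_forget_plus [Fintype V] [DecidableEq V]
    (G' : SimpleGraph V) (A X' : Finset V) (hG' : IsTerminalGraph G' A X')
    (v : V) (hv : v ∈ X') (N : Finset V) (hN : N ⊆ X'.erase v)
    (S : Finset V) (hS : S ⊆ A \ X')
    (α' β' α β : Finset V → ℕ)
    (h' : IsCharacteristic G' A X' S α' β')
    (h : IsCharacteristic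
          (G' ⊔ SimpleGraph.fromEdgeSet ((fun w => s(v, w)) '' (↑N : Set V)))
          A (X'.erase v) (insert v S) α β) :
    ∀ D ⊆ X'.erase v, α D = α' (insert v D) ∧ β D = β' (insert v D) :=
  char_forget_plus_general G' A X' hG' v hv N S hS α' β' α β h' h
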